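/- For any distinct i, j, k ∈ {1,2,3}, letting L be the subgroup of A generated by {eᵢ + eⱼ, mᵢ + mⱼ, mₖ}: φᵢⱼ maps L onto L; φⱼₖ does not map L onto L; φᵢₖ does not map L onto L; but the composite φⱼₖ ∘ φᵢₖ maps L onto L. That is, on the fold|m-boundary (eᵢeⱼ, mᵢmⱼ, mₖ) the wall s⁽²⁾ᵢⱼ condenses, the walls s⁽²⁾ⱼₖ and s⁽²⁾ᵢₖ individually do not, yet their composite s⁽²⁾ⱼₖ s⁽²⁾ᵢₖ does condense. -/

import Mathlib

/-- The group of topological excitations of three copies of the 3D toric code: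
pairs (a, b) of electric/magnetic labels in `(ZMod 2)³`. -/
abbrev A : Type := (Fin 3 → ZMod 2) × (Fin 3 → ZMod 2)

/-- The electric charge `eᵢ`. -/
def e (i : Fin 3) : A := (Pi.single i 1, 0)

/-- The magnetic flux `mᵢ`. -/
def m (i : Fin 3) : A := (0, Pi.single i 1)

/-- The mutual-statistics pairing `ω((a,b),(a',b')) = a·b' + a'·b`. -/
def ω (x y : A) : ZMod 2 :=
  (∑ t, x.1 t * y.2 t) + (∑ t, y.1 t * x.2 t)

/-- The action of the S-domain wall `s⁽²⁾ᵢⱼ` on excitations: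
`(a, b) ↦ (a + bⱼ•δᵢ + bᵢ•δⱼ, b)`. -/
def φ (i j : Fin 3) (x : A) : A :=
  (x.1 + x.2 j • (Pi.single i 1 : Fin 3 → ZMod 2) + x.2 i • (Pi.single j 1 : Fin 3 → ZMod 2), x.2)

/-- A subgroup `L` of `A` is Lagrangian if it equals its orthogonal complement
with respect to the pairing `ω`. -/
def IsLagrangian (L : AddSubgroup A) : Prop :=
  (L : Set A) = {x : A | ∀ l ∈ L, ω x l = 0}

/-!
Each `φ i j` is an additive involution, and any two of them commute, so `φ j k ∘ φ i k` is an
additive involution as well. Such a map sends a subgroup onto itself as soon as it sends its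
generators into it, which for `φ i j` and `φ j k ∘ φ i k` is a direct computation (for the
composite, the two copies of `e k` produced from `m i + m j` cancel). Conversely, every element
of `L = foldBoundary i j k` has equal `e i`- and `e j`-components, while `φ j k` and `φ i k`
send `m k ∈ L` to `e j + m k` and `e i + m k`.
-/

open Set Function

theorem Function.Involutive.image_eq_of_mapsTo {α : Type*} {f : α → α} (hf : Involutive f)
    {s : Set α} (h : MapsTo f s s) : f '' s = s :=
  h.image_subset.antisymm fun x hx => ⟨f x, h hx, hf x⟩

theorem Set.image_ne_of_mem_of_notMem {α : Type*} {f : α → α} {s : Set α} {x : α} (hx : x ∈ s)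
    (hfx : f x ∉ s) : f '' s ≠ s :=
  fun h => hfx (h ▸ mem_image_of_mem f hx)

theorem AddSubgroup.mapsTo_closure {G H : Type*} [AddGroup G] [AddGroup H] (f : G →+ H)
    {S : Set G} {K : AddSubgroup H} (h : MapsTo f S K) : MapsTo f (AddSubgroup.closure S) K :=
  fun _ hx => (AddSubgroup.closure_le (K.comap f)).2 h hx

theorem φ_add (i j : Fin 3) (x y : A) : φ i j (x + y) = φ i j x + φ i j y := by
  simp only [φ, Prod.fst_add, Prod.snd_add, Pi.add_apply, add_smul, Prod.mk_add_mk]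
  congr 1
  abel

def φHom (i j : Fin 3) : A →+ A := AddMonoidHom.mk' (φ i j) (φ_add i j)

@[simp] theorem coe_φHom (i j : Fin 3) : ⇑(φHom i j) = φ i j := rfl

theorem φ_comm (i j i' j' : Fin 3) (x : A) : φ i j (φ i' j' x) = φ i' j' (φ i j x) := by
  simp only [φ]
  congr 1
  abel

theorem φ_involutive (i j : Fin 3) : Involutive (φ i j) := fun x => by
  refine Prod.ext ?_ rfl
  simp only [φ]
  abel_nf
  simp only [two_zsmul, ZModModule.add_self, add_zero]

theorem φ_comp_involutive (i j k : Fin 3) : Involutive (φ j k ∘ φ i k) := fun x => by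
  rw [comp_apply, comp_apply, φ_comm i k j k, φ_involutive j k, φ_involutive i k]

theorem φ_e (i j t : Fin 3) : φ i j (e t) = e t := by simp [φ, e]

theorem φ_m_left {i j : Fin 3} (hij : i ≠ j) : φ i j (m i) = e j + m i := by
  simp [φ, e, m, Pi.single_eq_of_ne hij.symm]

theorem φ_m_right {i j : Fin 3} (hij : i ≠ j) : φ i j (m j) = e i + m j := by
  simp [φ, e, m, Pi.single_eq_of_ne hij]

theorem φ_m_of_ne {i j t : Fin 3} (hi : t ≠ i) (hj : t ≠ j) : φ i j (m t) = m t := by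
  simp [φ, m, hi, hj]

def foldBoundary (i j k : Fin 3) : AddSubgroup A :=
  AddSubgroup.closure {e i + e j, m i + m j, m k}

section foldBoundary

variable {i j k : Fin 3}

theorem add_e_mem_foldBoundary : e i + e j ∈ foldBoundary i j k :=
  AddSubgroup.subset_closure (by simp)

theorem add_m_mem_foldBoundary : m i + m j ∈ foldBoundary i j k :=
  AddSubgroup.subset_closure (by simp)

theorem m_mem_foldBoundary : m k ∈ foldBoundary i j k :=
  AddSubgroup.subset_closure (by simp)

theorem charge_add_charge_eq_zero_of_mem_foldBoundary (hij : i ≠ j) {x : A}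
    (hx : x ∈ foldBoundary i j k) : x.1 i + x.1 j = 0 := by
  induction hx using AddSubgroup.closure_induction with
  | mem y hy =>
    rcases hy with rfl | rfl | rfl
    · simp [e, Pi.single_eq_of_ne hij, Pi.single_eq_of_ne hij.symm]
      decide
    · simp [m]
    · simp [m]
  | zero => simp
  | add x y _ _ hx hy => simp only [Prod.fst_add, Pi.add_apply]; linear_combination hx + hy
  | neg x _ hx => simp only [Prod.fst_neg, Pi.neg_apply]; linear_combination -hx

theorem e_left_add_m_notMem_foldBoundary (hij : i ≠ j) (t : Fin 3) :
    e i + m t ∉ foldBoundary i j k := fun h => by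
  simpa [e, m, Pi.single_eq_of_ne hij.symm] using
    charge_add_charge_eq_zero_of_mem_foldBoundary hij h

theorem e_right_add_m_notMem_foldBoundary (hij : i ≠ j) (t : Fin 3) :
    e j + m t ∉ foldBoundary i j k := fun h => by
  simpa [e, m, Pi.single_eq_of_ne hij] using
    charge_add_charge_eq_zero_of_mem_foldBoundary hij h

variable (hij : i ≠ j) (hjk : j ≠ k) (hik : i ≠ k)
include hij hjk hik

theorem mapsTo_φ_foldBoundary : MapsTo (φ i j) (foldBoundary i j k) (foldBoundary i j k) := by
  refine AddSubgroup.mapsTo_closure (φHom i j) ?_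
  rintro _ (rfl | rfl | rfl) <;>
    simp only [coe_φHom, φ_add, φ_e, φ_m_left hij, φ_m_right hij, φ_m_of_ne hik.symm hjk.symm]
  · exact add_e_mem_foldBoundary
  · rw [show e j + m i + (e i + m j) = (e i + e j) + (m i + m j) by abel]
    exact add_mem add_e_mem_foldBoundary add_m_mem_foldBoundary
  · exact m_mem_foldBoundary

theorem mapsTo_φ_comp_foldBoundary :
    MapsTo (φ j k ∘ φ i k) (foldBoundary i j k) (foldBoundary i j k) := by
  refine AddSubgroup.mapsTo_closure ((φHom j k).comp (φHom i k)) ?_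
  rintro _ (rfl | rfl | rfl) <;>
    simp only [AddMonoidHom.coe_comp, coe_φHom, comp_apply, φ_add, φ_e, φ_m_left hik,
      φ_m_right hik, φ_m_left hjk, φ_m_right hjk, φ_m_of_ne hij hik, φ_m_of_ne hij.symm hjk]
  · exact add_e_mem_foldBoundary
  · rw [add_add_add_comm, ZModModule.add_self, zero_add]
    exact add_m_mem_foldBoundary
  · rw [← add_assoc]
    exact add_mem add_e_mem_foldBoundary m_mem_foldBoundary

end foldBoundary

theorem stmt_12 (i j k : Fin 3) (hij : i ≠ j) (hjk : j ≠ k) (hik : i ≠ k) :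
    φ i j '' ((AddSubgroup.closure {e i + e j, m i + m j, m k} : AddSubgroup A) : Set A) =
      ((AddSubgroup.closure {e i + e j, m i + m j, m k} : AddSubgroup A) : Set A) ∧
    φ j k '' ((AddSubgroup.closure {e i + e j, m i + m j, m k} : AddSubgroup A) : Set A) ≠
      ((AddSubgroup.closure {e i + e j, m i + m j, m k} : AddSubgroup A) : Set A) ∧
    φ i k '' ((AddSubgroup.closure {e i + e j, m i + m j, m k} : AddSubgroup A) : Set A) ≠
      ((AddSubgroup.closure {e i + e j, m i + m j, m k} : AddSubgroup A) : Set A) ∧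
    (φ j k ∘ φ i k) '' ((AddSubgroup.closure {e i + e j, m i + m j, m k} : AddSubgroup A) : Set A) =
      ((AddSubgroup.closure {e i + e j, m i + m j, m k} : AddSubgroup A) : Set A) := by
  refine ⟨(φ_involutive i j).image_eq_of_mapsTo (mapsTo_φ_foldBoundary hij hjk hik), ?_, ?_,
    (φ_comp_involutive i j k).image_eq_of_mapsTo (mapsTo_φ_comp_foldBoundary hij hjk hik)⟩
  · refine image_ne_of_mem_of_notMem m_mem_foldBoundary ?_
    rw [φ_m_right hjk]
    exact e_right_add_m_notMem_foldBoundary hij k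
  · refine image_ne_of_mem_of_notMem m_mem_foldBoundary ?_
    rw [φ_m_right hik]
    exact e_left_add_m_notMem_foldBoundary hij k
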